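/- arXiv:1711.00330 — 3 statements merged into one kernel-verified Lean document; each statement's English description precedes it below -/
import Mathlib

section
/- Let V be a type, F a strict undirected multifunction on V, and U, W nonempty subsets of V. Then F is (U,W)-bipartite if and only if U ∪ W = V, U ∩ W = ∅, and for every n ∈ ℕ: (F_-)^[2n](U) = U, (F_-)^[2n](W) = W, (F_-)^[2n+1](U) = W, and (F_-)^[2n+1](W) = U, where (F_-)^[k] denotes the k-fold iterate of the map B ↦ F_-(B) on subsets of V. -/
/-- The complete preimage `F_-(B) = {x | F(x) ∩ B ≠ ∅}`. -/
def preimMF {V : Type*} (F : V → Set V) (B : Set V) : Set V :=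
  {x | (F x ∩ B).Nonempty}

/-- A set is independent for `F` if `U ∩ F_-(U) = ∅`. -/
def IndepMF {V : Type*} (F : V → Set V) (U : Set V) : Prop :=
  U ∩ preimMF F U = ∅

/-- `F` is `(U,W)`-bipartite. -/
def BipartiteUW {V : Type*} (F : V → Set V) (U W : Set V) : Prop :=
  U.Nonempty ∧ W.Nonempty ∧ IndepMF F U ∧ IndepMF F W ∧
    U ∪ W = Set.univ ∧ U ∩ W = ∅

/-- Characterization of `(U,W)`-bipartiteness of a strict undirected
multifunction via iterates of the complete preimage. -/
theorem stmt_6 {V : Type*} (F : V → Set V)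
    (hstrict : ∀ v, (F v).Nonempty)
    (hundir : ∀ u v, u ∈ F v ↔ v ∈ F u)
    (U W : Set V) (hU : U.Nonempty) (hW : W.Nonempty) :
    BipartiteUW F U W ↔
      (U ∪ W = Set.univ ∧ U ∩ W = ∅ ∧
        ∀ n : ℕ,
          (preimMF F)^[2 * n] U = U ∧
          (preimMF F)^[2 * n] W = W ∧
          (preimMF F)^[2 * n + 1] U = W ∧
          (preimMF F)^[2 * n + 1] W = U) := by
  constructor
  · rintro ⟨-, -, hIU, hIW, hUW, hdisj⟩
    have key : ∀ A B : Set V, A ∪ B = Set.univ → IndepMF F A → IndepMF F B →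
        preimMF F A = B := by
      intro A B hAB hIA hIB
      ext x
      constructor
      · rintro ⟨y, hyF, hyA⟩
        have hx : x ∈ A ∪ B := hAB ▸ Set.mem_univ x
        rcases hx with hx | hx
        · exact absurd (Set.mem_inter hx (⟨y, hyF, hyA⟩ : x ∈ preimMF F A))
            (Set.eq_empty_iff_forall_notMem.mp hIA x)
        · exact hx
      · intro hxB
        obtain ⟨y, hy⟩ := hstrict x
        have hy' : y ∈ A ∪ B := hAB ▸ Set.mem_univ y
        rcases hy' with hy' | hy'
        · exact ⟨y, hy, hy'⟩
        · have : y ∈ preimMF F B := ⟨x, (hundir x y).mpr hy, hxB⟩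
          exact absurd (Set.mem_inter hy' this)
            (Set.eq_empty_iff_forall_notMem.mp hIB y)
    have hPU : preimMF F U = W := key U W hUW hIU hIW
    have hPW : preimMF F W = U := key W U (by rw [Set.union_comm]; exact hUW) hIW hIU
    refine ⟨hUW, hdisj, ?_⟩
    intro n
    induction n with
    | zero => simp [hPU, hPW]
    | succ k ih =>
      obtain ⟨h1, h2, h3, h4⟩ := ih
      have e1 : 2 * (k + 1) = 2 * k + 1 + 1 := by ring
      have e2 : 2 * (k + 1) + 1 = 2 * k + 1 + 1 + 1 := by ring
      refine ⟨?_, ?_, ?_, ?_⟩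
      · rw [e1, Function.iterate_succ_apply', h3, hPW]
      · rw [e1, Function.iterate_succ_apply', h4, hPU]
      · rw [e2, Function.iterate_succ_apply', Function.iterate_succ_apply', h3, hPW, hPU]
      · rw [e2, Function.iterate_succ_apply', Function.iterate_succ_apply', h4, hPU, hPW]
  · rintro ⟨hUW, hdisj, hiter⟩
    obtain ⟨-, -, h3, h4⟩ := hiter 0
    simp only [Nat.mul_zero, Nat.zero_add, Function.iterate_one] at h3 h4
    refine ⟨hU, hW, ?_, ?_, hUW, hdisj⟩
    · unfold IndepMF; rw [h3]; exact hdisj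
    · unfold IndepMF; rw [h4, Set.inter_comm]; exact hdisj
end

section
/- Let V be a type and F a simple graph multifunction on V. If the multifunction v ↦ F^{2∪}(v) is connected, then F is connected and F is not bipartite. -/
/-!
A step of `v ↦ F^{2∪}(v)` is two steps of `F`, so `(F^{2∪})^{n∪} = F^{2n∪}` and connectivity of
`F^{2∪}` passes to `F`. If `F` had a bipartition `U, W`, then `F` would map each side into the
other, so walks of even length from `w ∈ W` would never leave `W` and could not reach `U`.
-/

/-- The union image `S_F` of a multifunction. -/
def unionImage {V : Type*} (F : V → Set V) (A : Set V) : Set V := ⋃ a ∈ A, F a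

/-- The `n`-th union iterate `F^{n∪}(v) = S_F^[n] {v}`. -/
def iterUnion {V : Type*} (F : V → Set V) (n : ℕ) (v : V) : Set V :=
  (unionImage F)^[n] {v}

/-- A multifunction is connected if every two vertices are joined by some walk
of positive length. -/
def ConnectedMF {V : Type*} (G : V → Set V) : Prop :=
  ∀ u w : V, ∃ n ≥ 1, u ∈ iterUnion G n w

/-- `F` is bipartite if `V` splits into two nonempty disjoint independent sets. -/
def BipartiteMF {V : Type*} (F : V → Set V) : Prop :=
  ∃ U W : Set V, U.Nonempty ∧ W.Nonempty ∧ IndepMF F U ∧ IndepMF F W ∧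
    U ∪ W = Set.univ ∧ U ∩ W = ∅

/-- `F` is a simple graph multifunction: loopless and undirected. -/
def SimpleGraphMF {V : Type*} (F : V → Set V) : Prop :=
  (∀ v, v ∉ F v) ∧ (∀ u v, u ∈ F v ↔ v ∈ F u)

open Set

section UnionImage

variable {V : Type*} (F : V → Set V)

lemma unionImage_mono {A B : Set V} (h : A ⊆ B) : unionImage F A ⊆ unionImage F B :=
  biUnion_subset_biUnion_left h

lemma unionImage_biUnion {ι : Type*} (I : Set ι) (A : ι → Set V) :
    unionImage F (⋃ i ∈ I, A i) = ⋃ i ∈ I, unionImage F (A i) := by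
  ext x
  simp only [unionImage, mem_iUnion, exists_prop]
  grind

lemma iterUnion_succ (n : ℕ) (v : V) :
    iterUnion F (n + 1) v = unionImage F (iterUnion F n v) :=
  Function.iterate_succ_apply' _ _ _

lemma iterate_unionImage_eq_biUnion (k : ℕ) (A : Set V) :
    (unionImage F)^[k] A = ⋃ a ∈ A, iterUnion F k a := by
  induction k with
  | zero => simp [iterUnion]
  | succ k ih =>
    simp only [Function.iterate_succ_apply', ih, unionImage_biUnion, iterUnion_succ]

lemma unionImage_iterUnion (k : ℕ) (A : Set V) :
    unionImage (iterUnion F k) A = (unionImage F)^[k] A :=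
  (iterate_unionImage_eq_biUnion F k A).symm

lemma iterUnion_iterUnion (k n : ℕ) (v : V) :
    iterUnion (iterUnion F k) n v = iterUnion F (k * n) v := by
  induction n with
  | zero => rfl
  | succ n ih =>
    rw [iterUnion_succ, ih, unionImage_iterUnion, iterUnion, iterUnion, ← Function.iterate_add_apply,
      Nat.mul_succ, Nat.add_comm]

lemma ConnectedMF.of_iterUnion {k : ℕ} (hk : 1 ≤ k) (h : ConnectedMF (iterUnion F k)) :
    ConnectedMF F := by
  intro u w
  obtain ⟨n, hn, hu⟩ := h u w
  rw [iterUnion_iterUnion] at hu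
  exact ⟨k * n, Nat.mul_pos hk hn, hu⟩

end UnionImage

section Bipartite

variable {V : Type*} {F : V → Set V} {U W : Set V}

lemma IndepMF.unionImage_subset (hW : IndepMF F W) (hUW : U ∪ W = univ) :
    unionImage F W ⊆ U := by
  refine iUnion₂_subset fun w hw x hx => ?_
  by_contra hxU
  have hxW : x ∈ W := (hUW.symm ▸ mem_univ x : x ∈ U ∪ W).resolve_left hxU
  exact (eq_empty_iff_forall_notMem.mp hW) w ⟨hw, x, hx, hxW⟩

lemma iterUnion_two_mul_subset (hU : IndepMF F U) (hW : IndepMF F W) (hUW : U ∪ W = univ)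
    {w : V} (hw : w ∈ W) (n : ℕ) : iterUnion F (2 * n) w ⊆ W := by
  induction n with
  | zero => simpa [iterUnion] using hw
  | succ n ih =>
    rw [Nat.mul_succ, iterUnion_succ, iterUnion_succ]
    exact (unionImage_mono F <| (unionImage_mono F ih).trans (hW.unionImage_subset hUW)).trans
      (hU.unionImage_subset (union_comm U W ▸ hUW))

lemma BipartiteMF.not_connectedMF_iterUnion_two (h : BipartiteMF F) :
    ¬ ConnectedMF (iterUnion F 2) := by
  intro hconn
  obtain ⟨U, W, ⟨u, hu⟩, ⟨w, hw⟩, hU, hW, hUW, hdisj⟩ := h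
  obtain ⟨n, -, hun⟩ := hconn u w
  rw [iterUnion_iterUnion] at hun
  exact (eq_empty_iff_forall_notMem.mp hdisj) u ⟨hu, iterUnion_two_mul_subset hU hW hUW hw n hun⟩

end Bipartite

theorem stmt_9_general {V : Type*} (F : V → Set V)
    (hconn2 : ConnectedMF (fun v => iterUnion F 2 v)) :
    ConnectedMF F ∧ ¬ BipartiteMF F :=
  ⟨hconn2.of_iterUnion F (by norm_num), fun h => h.not_connectedMF_iterUnion_two hconn2⟩

/-- If `F^{2∪}` is connected then `F` is connected and not bipartite. -/
theorem stmt_9 {V : Type*} (F : V → Set V)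
    (hsg : SimpleGraphMF F)
    (hconn2 : ConnectedMF (fun v => iterUnion F 2 v)) :
    ConnectedMF F ∧ ¬ BipartiteMF F :=
  stmt_9_general F hconn2
end

section
/- (König theorem for multifunctions) Let V be a nonempty type and F a connected simple graph multifunction on V. Then F is bipartite if and only if for every n ∈ ℕ and every v ∈ V, v ∉ F^{(2·n+1)∪}(v). -/
section Aux

variable {V : Type*} {F : V → Set V}

lemma unionImage_mono_s10 : Monotone (unionImage F) := fun _ _ h =>
  Set.biUnion_mono h (fun _ _ => subset_rfl)

lemma mem_iter_zero {u v : V} : u ∈ iterUnion F 0 v ↔ u = v := by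
  simp [iterUnion]

lemma mem_iter_succ {u v : V} {n : ℕ} :
    u ∈ iterUnion F (n+1) v ↔ ∃ w, w ∈ iterUnion F n v ∧ u ∈ F w := by
  rw [iterUnion, Function.iterate_succ_apply']
  simp [unionImage, iterUnion]

lemma iter_front {u v w : V} {n : ℕ} (hw : w ∈ F v) (hu : u ∈ iterUnion F n w) :
    u ∈ iterUnion F (n+1) v := by
  have h1 : iterUnion F (n+1) v = (unionImage F)^[n] (unionImage F {v}) := by
    rw [iterUnion, Function.iterate_succ_apply]
  have h2 : unionImage F {v} = F v := by simp [unionImage]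
  rw [h1, h2]
  exact (unionImage_mono_s10.iterate n) (Set.singleton_subset_iff.mpr hw) hu

lemma iter_concat {u v w : V} {m n : ℕ} (hw : w ∈ iterUnion F n v)
    (hu : u ∈ iterUnion F m w) : u ∈ iterUnion F (m+n) v := by
  have h1 : iterUnion F (m+n) v = (unionImage F)^[m] (iterUnion F n v) := by
    rw [iterUnion, Function.iterate_add_apply]; rfl
  rw [h1]
  exact (unionImage_mono_s10.iterate m) (Set.singleton_subset_iff.mpr hw) hu

lemma iter_symm (hund : ∀ u v, u ∈ F v ↔ v ∈ F u) :
    ∀ n (u v : V), u ∈ iterUnion F n v → v ∈ iterUnion F n u := by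
  intro n
  induction n with
  | zero => intro u v h; rw [mem_iter_zero] at h ⊢; exact h.symm
  | succ n ih =>
    intro u v h
    obtain ⟨w, hw, huw⟩ := mem_iter_succ.mp h
    exact iter_front ((hund u w).mp huw) (ih w v hw)

lemma mem_iter_one {u v : V} (h : u ∈ F v) : u ∈ iterUnion F 1 v :=
  mem_iter_succ.mpr ⟨v, mem_iter_zero.mpr rfl, h⟩

end Aux

/-- König theorem for multifunctions: a connected simple graph multifunction is
bipartite iff all odd iterates are loopless. -/
theorem stmt_10 {V : Type*} [Nonempty V] (F : V → Set V)
    (hsg : SimpleGraphMF F) (hconn : ConnectedMF F) :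
    BipartiteMF F ↔ ∀ (n : ℕ) (v : V), v ∉ iterUnion F (2 * n + 1) v := by
  obtain ⟨hloop, hund⟩ := hsg
  constructor
  · rintro ⟨U, W, hU, hW, iU, iW, huniv, hdisj⟩ n v hv
    have hmem : ∀ x : V, x ∈ U ∨ x ∈ W := fun x =>
      Set.eq_univ_iff_forall.mp huniv x
    have edge : ∀ u w : V, u ∈ F w → (u ∈ U ↔ w ∉ U) := by
      intro u w huw
      constructor
      · intro hu hwU
        have : w ∈ U ∩ preimMF F U := ⟨hwU, ⟨u, huw, hu⟩⟩
        rw [iU] at this; exact this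
      · intro hwU
        rcases hmem w with h | h
        · exact absurd h hwU
        · by_contra huU
          rcases hmem u with h' | h'
          · exact huU h'
          · have : w ∈ W ∩ preimMF F W := ⟨h, ⟨u, huw, h'⟩⟩
            rw [iW] at this; exact this
    have claim : ∀ m (x y : V), y ∈ iterUnion F m x → ((y ∈ U ↔ x ∈ U) ↔ Even m) := by
      intro m
      induction m with
      | zero => intro x y h; rw [mem_iter_zero] at h; subst h; simp
      | succ m ih =>
        intro x y h
        obtain ⟨w, hw, hyw⟩ := mem_iter_succ.mp h
        have h1 := ih x w hw
        have h2 := edge y w hyw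
        rw [Nat.even_add_one]
        tauto
    have hcl := claim (2*n+1) v v hv
    simp [Nat.even_add_one, parity_simps] at hcl
  · intro hodd
    obtain ⟨v0⟩ := ‹Nonempty V›
    refine ⟨{u | ∃ k, u ∈ iterUnion F (2*k) v0}, {u | ∃ k, u ∈ iterUnion F (2*k+1) v0},
      ⟨v0, 0, mem_iter_zero.mpr rfl⟩, ?_, ?_, ?_, ?_, ?_⟩
    · -- W nonempty
      obtain ⟨n, hn1, hn⟩ := hconn v0 v0
      obtain ⟨m, rfl⟩ : ∃ m, n = m + 1 := ⟨n - 1, by omega⟩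
      obtain ⟨w, _, hvw⟩ := mem_iter_succ.mp hn
      exact ⟨w, 0, mem_iter_one ((hund w v0).mpr hvw)⟩
    · -- U independent
      rw [IndepMF, Set.eq_empty_iff_forall_notMem]
      rintro x ⟨⟨a, hx⟩, ⟨y, hyx, ⟨b, hy⟩⟩⟩
      have h1 : y ∈ iterUnion F (1 + 2*a) v0 := iter_concat hx (mem_iter_one hyx)
      have h2 : v0 ∈ iterUnion F (2*b) y := iter_symm hund _ y v0 hy
      have h3 : v0 ∈ iterUnion F (2*b + (1 + 2*a)) v0 := iter_concat h1 h2
      apply hodd (b + a) v0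
      have e : 2*(b+a)+1 = 2*b + (1 + 2*a) := by ring
      rw [e]; exact h3
    · -- W independent
      rw [IndepMF, Set.eq_empty_iff_forall_notMem]
      rintro x ⟨⟨a, hx⟩, ⟨y, hyx, ⟨b, hy⟩⟩⟩
      have h1 : y ∈ iterUnion F (1 + (2*a+1)) v0 := iter_concat hx (mem_iter_one hyx)
      have h2 : v0 ∈ iterUnion F (2*b+1) y := iter_symm hund _ y v0 hy
      have h3 : v0 ∈ iterUnion F (2*b+1 + (1 + (2*a+1))) v0 := iter_concat h1 h2
      apply hodd (b + a + 1) v0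
      have e : 2*(b+a+1)+1 = 2*b+1 + (1 + (2*a+1)) := by ring
      rw [e]; exact h3
    · -- union is univ
      apply Set.eq_univ_iff_forall.mpr
      intro x
      obtain ⟨n, _, hn⟩ := hconn x v0
      rcases Nat.even_or_odd n with ⟨k, hk⟩ | ⟨k, hk⟩
      · left; exact ⟨k, by rw [show 2*k = n by omega]; exact hn⟩
      · right; exact ⟨k, by rw [show 2*k+1 = n by omega]; exact hn⟩
    · -- disjoint
      rw [Set.eq_empty_iff_forall_notMem]
      rintro x ⟨⟨a, hxa⟩, ⟨b, hxb⟩⟩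
      have h2 : v0 ∈ iterUnion F (2*a) x := iter_symm hund _ x v0 hxa
      have h3 : v0 ∈ iterUnion F (2*a + (2*b+1)) v0 := iter_concat hxb h2
      apply hodd (a + b) v0
      have e : 2*(a+b)+1 = 2*a + (2*b+1) := by ring
      rw [e]; exact h3
end
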